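/- Let σ be continuous and positive, S continuous, G(S) < ∞, f_S the invariant density, F measurable with ∫_ℝ |F| f_S < ∞, ϑ = ∫_ℝ F f_S, M(y) = ∫_{-∞}^y (F(v) − ϑ) f_S(v) dv, and suppose J := ∫_ℝ M(y)²/(σ(y)² f_S(y)) dy is finite and positive. If ψ : ℝ → ℝ is continuous with compact support and satisfies the constraint ∫_ℝ (F(x) − ϑ)(∫_0^x ψ(v) dv) f_S(x) dx = 1/2, then ∫_ℝ ψ(y)² σ(y)² f_S(y) dy ≥ I_* where I_* = (4J)^{-1}. -/

import Mathlib

/-!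
Since `F - ϑ` is centred under `f_S`, `M` vanishes at `±∞`, and an integration by parts (Fubini
on the half-plane `v ≤ x`) turns the constraint into `∫ ψ M = -1/2`. Cauchy–Schwarz with the
weights `σ² f_S` and `(σ² f_S)⁻¹` then gives `1/4 = (∫ ψ M)² ≤ (∫ ψ² σ² f_S) J`.
-/

open MeasureTheory Real Set Filter

/-- Half the density of the speed measure of the diffusion; `G(S)` is its total mass. -/
noncomputable def speedDensity (σ S : ℝ → ℝ) (y : ℝ) : ℝ :=
  ((σ y) ^ 2)⁻¹ * Real.exp (2 * ∫ v in (0:ℝ)..y, S v / (σ v) ^ 2)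

noncomputable def invariantDensity (σ S : ℝ → ℝ) (x : ℝ) : ℝ :=
  (∫ y, speedDensity σ S y)⁻¹ * speedDensity σ S x

section InvariantDensity

variable {σ S : ℝ → ℝ}

theorem speedDensity_pos {y : ℝ} (hσ : σ y ≠ 0) : 0 < speedDensity σ S y :=
  mul_pos (inv_pos.2 (sq_pos_of_ne_zero hσ)) (exp_pos _)

theorem continuous_speedDensity (hσc : Continuous σ) (hσ : ∀ x, σ x ≠ 0) (hSc : Continuous S) :
    Continuous (speedDensity σ S) := by
  have hσ2 : Continuous fun y => σ y ^ 2 := hσc.pow 2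
  have hσ2ne : ∀ y, σ y ^ 2 ≠ 0 := fun y => pow_ne_zero 2 (hσ y)
  refine (hσ2.inv₀ hσ2ne).mul (continuous_exp.comp (continuous_const.mul ?_))
  exact intervalIntegral.continuous_primitive
    (fun a b => (hSc.div hσ2 hσ2ne).intervalIntegrable a b) 0

theorem integral_speedDensity_pos (hσ : ∀ x, σ x ≠ 0) (hG : Integrable (speedDensity σ S)) :
    0 < ∫ y, speedDensity σ S y := by
  refine (integral_pos_iff_support_of_nonneg (fun y => (speedDensity_pos (hσ y)).le) hG).2 ?_
  rw [Function.support_eq_univ fun y => (speedDensity_pos (hσ y)).ne']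
  simp

theorem invariantDensity_pos (hσ : ∀ x, σ x ≠ 0) (hG : Integrable (speedDensity σ S)) (x : ℝ) :
    0 < invariantDensity σ S x :=
  mul_pos (inv_pos.2 (integral_speedDensity_pos hσ hG)) (speedDensity_pos (hσ x))

theorem continuous_invariantDensity (hσc : Continuous σ) (hσ : ∀ x, σ x ≠ 0)
    (hSc : Continuous S) : Continuous (invariantDensity σ S) :=
  continuous_const.mul (continuous_speedDensity hσc hσ hSc)

theorem integrable_invariantDensity (hG : Integrable (speedDensity σ S)) :
    Integrable (invariantDensity σ S) :=
  hG.const_mul _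

theorem integral_invariantDensity (hσ : ∀ x, σ x ≠ 0) (hG : Integrable (speedDensity σ S)) :
    ∫ x, invariantDensity σ S x = 1 := by
  simp only [invariantDensity]
  rw [integral_const_mul, inv_mul_cancel₀ (integral_speedDensity_pos hσ hG).ne']

end InvariantDensity

section WeightedIntegrals

variable {α : Type*} [MeasurableSpace α] {μ : Measure α}

theorem integrable_mul_of_integrable_abs_mul {F p : α → ℝ} (hF : AEStronglyMeasurable F μ)
    (hp : AEStronglyMeasurable p μ) (hp0 : ∀ᵐ x ∂μ, 0 ≤ p x)
    (hFp : Integrable (fun x => |F x| * p x) μ) : Integrable (fun x => F x * p x) μ :=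
  hFp.mono' (hF.mul hp) <| hp0.mono fun x hx => by
    rw [norm_mul, Real.norm_eq_abs, Real.norm_of_nonneg hx]

theorem integrable_sub_const_mul_of_integrable_mul {F p : α → ℝ} (c : ℝ) (hp : Integrable p μ)
    (hFp : Integrable (fun x => F x * p x) μ) : Integrable (fun x => (F x - c) * p x) μ := by
  simp only [sub_mul]
  exact hFp.sub (hp.const_mul c)

theorem integral_sub_integral_mul_mul_eq_zero {F p : α → ℝ} (hp : Integrable p μ)
    (hp1 : ∫ x, p x ∂μ = 1) (hFp : Integrable (fun x => F x * p x) μ) :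
    ∫ x, (F x - ∫ y, F y * p y ∂μ) * p x ∂μ = 0 := by
  simp only [sub_mul]
  rw [integral_sub hFp (hp.const_mul _), integral_const_mul, hp1, mul_one, sub_self]

theorem sq_integral_mul_le_integral_mul_weight_mul_integral_div_weight {f g w : α → ℝ}
    (hw : ∀ᵐ x ∂μ, 0 < w x) (hf : Integrable (fun x => f x ^ 2 * w x) μ)
    (hg : Integrable (fun x => g x ^ 2 / w x) μ) (hfg : Integrable (fun x => f x * g x) μ) :
    (∫ x, f x * g x ∂μ) ^ 2 ≤ (∫ x, f x ^ 2 * w x ∂μ) * ∫ x, g x ^ 2 / w x ∂μ := by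
  set A := ∫ x, f x ^ 2 * w x ∂μ
  set B := ∫ x, f x * g x ∂μ
  set C := ∫ x, g x ^ 2 / w x ∂μ
  have hquad : ∀ t : ℝ, 0 ≤ A * (t * t) + 2 * B * t + C := fun t => calc
    0 ≤ ∫ x, (t * f x * w x + g x) ^ 2 / w x ∂μ :=
      integral_nonneg_of_ae (hw.mono fun x hx => by positivity)
    _ = ∫ x, (t * t * (f x ^ 2 * w x) + 2 * t * (f x * g x) + g x ^ 2 / w x) ∂μ :=
      integral_congr_ae <| hw.mono fun x hx => by field_simp; ring
    _ = A * (t * t) + 2 * B * t + C := by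
      rw [integral_add _ hg, integral_add (hf.const_mul _) (hfg.const_mul _), integral_const_mul,
        integral_const_mul]
      · ring
      · exact (hf.const_mul _).add (hfg.const_mul _)
  have := discrim_le_zero hquad
  rw [discrim] at this
  nlinarith

end WeightedIntegrals

section HalfLineIntegrals

variable {g ψ : ℝ → ℝ}

theorem continuous_integral_Iic (hg : Integrable g) : Continuous fun y => ∫ x in Iic y, g x := by
  have h : ∀ y, ∫ x in Iic y, g x = (∫ x in Iic 0, g x) + ∫ x in (0:ℝ)..y, g x := fun y => by
    rw [← intervalIntegral.integral_Iic_sub_Iic hg.integrableOn hg.integrableOn, add_sub_cancel]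
  rw [funext h]
  exact continuous_const.add (hg.continuous_primitive 0)

theorem norm_integral_Iic_le (hg : Integrable g) (y : ℝ) :
    ‖∫ x in Iic y, g x‖ ≤ ∫ x, ‖g x‖ :=
  (norm_integral_le_integral_norm _).trans
    (setIntegral_le_integral hg.norm (ae_of_all _ fun _ => norm_nonneg _))

theorem integrable_mul_integral_Iic (hg : Integrable g) (hψ : Integrable ψ) :
    Integrable fun x => g x * ∫ v in Iic x, ψ v := by
  simp only [mul_comm (g _)]
  exact hg.bdd_mul (continuous_integral_Iic hψ).aestronglyMeasurable
    (ae_of_all _ (norm_integral_Iic_le hψ))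

theorem integral_mul_integral_Iic_eq_integral_mul_integral_Ici (hg : Integrable g)
    (hψ : Integrable ψ) :
    ∫ x, g x * ∫ v in Iic x, ψ v = ∫ v, ψ v * ∫ x in Ici v, g x := by
  set T := {p : ℝ × ℝ | p.2 ≤ p.1}
  have hT : MeasurableSet T := measurableSet_le measurable_snd measurable_fst
  have hint : Integrable (T.indicator fun p => g p.1 * ψ p.2) (volume.prod volume) :=
    (hg.mul_prod hψ).indicator hT
  calc ∫ x, g x * ∫ v in Iic x, ψ v
      = ∫ x, ∫ v, T.indicator (fun p => g p.1 * ψ p.2) (x, v) := by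
        congr 1 with x
        rw [← integral_indicator measurableSet_Iic, ← integral_const_mul]
        congr 1 with v
        by_cases h : v ≤ x <;> simp [T, indicator, h]
    _ = ∫ v, ∫ x, T.indicator (fun p => g p.1 * ψ p.2) (x, v) := integral_integral_swap hint
    _ = ∫ v, ψ v * ∫ x in Ici v, g x := by
        congr 1 with v
        rw [← integral_indicator measurableSet_Ici, ← integral_const_mul]
        congr 1 with x
        by_cases h : v ≤ x <;> simp [T, indicator, h, mul_comm]

theorem integral_mul_intervalIntegral_eq_neg_integral_mul_integral_Iic (hg : Integrable g)
    (hg0 : ∫ x, g x = 0) (hψ : Integrable ψ) :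
    ∫ x, g x * (∫ v in (0:ℝ)..x, ψ v) = -∫ v, ψ v * ∫ x in Iic v, g x := by
  have hIci : ∀ v, ∫ x in Ici v, g x = -∫ x in Iic v, g x := fun v => by
    rw [integral_Iic_eq_integral_Iio, eq_neg_iff_add_eq_zero, add_comm,
      intervalIntegral.integral_Iio_add_Ici hg.integrableOn hg.integrableOn, hg0]
  calc ∫ x, g x * (∫ v in (0:ℝ)..x, ψ v)
      = (∫ x, g x * ∫ v in Iic x, ψ v) - (∫ x, g x) * ∫ v in Iic 0, ψ v := by
        simp only [← intervalIntegral.integral_Iic_sub_Iic hψ.integrableOn hψ.integrableOn, mul_sub]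
        rw [integral_sub (integrable_mul_integral_Iic hg hψ) (hg.mul_const _), integral_mul_const]
    _ = -∫ v, ψ v * ∫ x in Iic v, g x := by
        rw [hg0, zero_mul, sub_zero, integral_mul_integral_Iic_eq_integral_mul_integral_Ici hg hψ]
        simp only [hIci, mul_neg, integral_neg]

end HalfLineIntegrals

open MeasureTheory Real Set Filter intervalIntegral

/-- With σ continuous and positive, S continuous, G(S) < ∞, `fS` the invariant
density, `F` measurable with `∫ |F| fS < ∞`, `ϑ = ∫ F fS`, `M(y) = ∫_{-∞}^y (F - ϑ) fS`, and
`J = ∫ M²/(σ² fS)` finite and positive: every continuous compactly supported `ψ` satisfying the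
constraint `∫ (F(x) - ϑ)(∫_0^x ψ) fS(x) dx = 1/2` has
`∫ ψ² σ² fS ≥ I_* = (4 J)⁻¹`. -/
theorem moment_estimation_stmt4
    (σ S : ℝ → ℝ)
    (hσc : Continuous σ) (hσpos : ∀ x, 0 < σ x)
    (hSc : Continuous S)
    (hGfin : Integrable (fun y : ℝ =>
      ((σ y) ^ 2)⁻¹ * Real.exp (2 * ∫ v in (0:ℝ)..y, S v / (σ v) ^ 2)))
    (fS : ℝ → ℝ)
    (hfS : ∀ x, fS x =
      (∫ y : ℝ, ((σ y) ^ 2)⁻¹ * Real.exp (2 * ∫ v in (0:ℝ)..y, S v / (σ v) ^ 2))⁻¹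
        * ((σ x) ^ 2)⁻¹ * Real.exp (2 * ∫ v in (0:ℝ)..x, S v / (σ v) ^ 2))
    (F : ℝ → ℝ) (hFm : Measurable F)
    (hFint : Integrable (fun x => |F x| * fS x))
    (ϑ : ℝ) (hϑ : ϑ = ∫ x : ℝ, F x * fS x)
    (M : ℝ → ℝ) (hM : ∀ y, M y = ∫ v in Set.Iic y, (F v - ϑ) * fS v)
    (J : ℝ) (hJ : J = ∫ y : ℝ, (M y) ^ 2 / ((σ y) ^ 2 * fS y))
    (hJfin : Integrable (fun y : ℝ => (M y) ^ 2 / ((σ y) ^ 2 * fS y)))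
    (hJpos : 0 < J)
    (ψ : ℝ → ℝ) (hψc : Continuous ψ) (hψs : HasCompactSupport ψ)
    (hconstraint : ∫ x : ℝ, (F x - ϑ) * (∫ v in (0:ℝ)..x, ψ v) * fS x = 1 / 2) :
    (4 * J)⁻¹ ≤ ∫ y : ℝ, (ψ y) ^ 2 * (σ y) ^ 2 * fS y := by
  have hσ : ∀ x, σ x ≠ 0 := fun x => (hσpos x).ne'
  obtain rfl : fS = invariantDensity σ S := funext fun x => (hfS x).trans (mul_assoc _ _ _)
  have hfSpos := invariantDensity_pos hσ hGfin
  have hfSc := continuous_invariantDensity hσc hσ hSc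
  have hFfS : Integrable fun x => F x * invariantDensity σ S x :=
    integrable_mul_of_integrable_abs_mul hFm.aestronglyMeasurable hfSc.aestronglyMeasurable
      (ae_of_all _ fun x => (hfSpos x).le) hFint
  set g := fun x => (F x - ϑ) * invariantDensity σ S x
  have hg : Integrable g :=
    integrable_sub_const_mul_of_integrable_mul ϑ (integrable_invariantDensity hGfin) hFfS
  have hg0 : ∫ x, g x = 0 := by
    simp only [g, hϑ]
    exact integral_sub_integral_mul_mul_eq_zero (integrable_invariantDensity hGfin)
      (integral_invariantDensity hσ hGfin) hFfS
  obtain rfl : M = fun y => ∫ x in Iic y, g x := funext hM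
  have hψM : ∫ y, ψ y * ∫ x in Iic y, g x = -(1 / 2) := by
    rw [← hconstraint, ← neg_neg (∫ y, _ ∂volume),
      ← integral_mul_intervalIntegral_eq_neg_integral_mul_integral_Iic hg hg0
        (hψc.integrable_of_hasCompactSupport hψs)]
    congr 2 with x
    simp only [g]
    ring
  have hψ2σ2fS : Integrable fun y => ψ y ^ 2 * (σ y ^ 2 * invariantDensity σ S y) := by
    have : Continuous fun y => ψ y * (ψ y * (σ y ^ 2 * invariantDensity σ S y)) := by fun_prop
    simpa only [← mul_assoc, ← sq] using this.integrable_of_hasCompactSupport hψs.mul_right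
  have hCS := sq_integral_mul_le_integral_mul_weight_mul_integral_div_weight
    (w := fun y => σ y ^ 2 * invariantDensity σ S y)
    (ae_of_all _ fun y => mul_pos (pow_pos (hσpos y) 2) (hfSpos y)) hψ2σ2fS hJfin
    ((hψc.mul (continuous_integral_Iic hg)).integrable_of_hasCompactSupport hψs.mul_right)
  simp only [← mul_assoc] at hCS
  rw [hψM, ← hJ] at hCS
  rw [← one_div, div_le_iff₀ (by positivity)]
  nlinarith
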